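/- Fix r ≥ 2, n ≥ 1, and 1 ≤ k ≤ n/2. The number of pairs (M, {M_1, M_2}), where M is an ordered r-matching of size n on [rn] and {M_1, M_2} is an unordered pair of vertex-disjoint isomorphic sub-matchings of M each of size k, equals (1/2) · (rn)! / ((rk)! · (rk)! · (rn−2rk)!) · α_k · α_{n−2k}, where α_m = (rm)!/((r!)^m · m!). Equivalently, the expected number of twins of size k in a uniformly random ordered r-matching of size n equals (1/2) · (n!/(n−2k)!) · (1/k!) · (r!)^k / (rk)!. -/

import Mathlib

/-- A (sub-)matching: a finite set of pairwise disjoint `r`-element subsets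
("edges") of the linearly ordered vertex set `ℕ`. -/
def IsMatching (r : ℕ) (M : Finset (Finset ℕ)) : Prop :=
  (∀ e ∈ M, e.card = r) ∧ ∀ e ∈ M, ∀ f ∈ M, e ≠ f → Disjoint e f

/-- The vertex support of a matching: the union of its edges. -/
def mSupport (M : Finset (Finset ℕ)) : Finset ℕ := M.sup id

/-- An ordered `r`-matching of size `n`: `n` pairwise disjoint `r`-element edges
partitioning `[rn] = {1, …, rn}`. -/
def IsOrderedMatching (r n : ℕ) (M : Finset (Finset ℕ)) : Prop :=
  IsMatching r M ∧ M.card = n ∧ mSupport M = Finset.Icc 1 (r * n)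

/-- Two ordered matchings are isomorphic if some (equivalently, the unique)
order-preserving bijection between their vertex supports maps edges onto edges. -/
def MatchIso (M N : Finset (Finset ℕ)) : Prop :=
  ∃ f : ℕ → ℕ, Set.BijOn f (mSupport M : Set ℕ) (mSupport N : Set ℕ) ∧
    (∀ x ∈ mSupport M, ∀ y ∈ mSupport M, x < y → f x < f y) ∧
    N = M.image fun e => e.image f

/-- `M` contains twins of size `k`: a pair of vertex-disjoint isomorphic
sub-matchings of `M`, each with `k` edges. -/
def HasTwins (M : Finset (Finset ℕ)) (k : ℕ) : Prop :=
  ∃ M₁ M₂ : Finset (Finset ℕ), M₁ ⊆ M ∧ M₂ ⊆ M ∧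
    Disjoint (mSupport M₁) (mSupport M₂) ∧ MatchIso M₁ M₂ ∧
    M₁.card = k ∧ M₂.card = k

/-- `t(M)`: the maximum size of twins in `M`. -/
noncomputable def twinMax (M : Finset (Finset ℕ)) : ℕ := sSup {k | HasTwins M k}

/-- `t^(r)(n)`: the minimum of `t(M)` over all ordered `r`-matchings of size `n`. -/
noncomputable def minTwins (r n : ℕ) : ℕ :=
  sInf {t | ∃ M, IsOrderedMatching r n M ∧ twinMax M = t}

/-- A permutation `π` of `[n]` has twins of length `k`: two order-isomorphic
subsequences occupying disjoint sets of positions. -/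
def PermTwins {n : ℕ} (π : Equiv.Perm (Fin n)) (k : ℕ) : Prop :=
  ∃ a b : Fin k → Fin n, StrictMono a ∧ StrictMono b ∧
    (∀ i j, a i ≠ b j) ∧ ∀ i j, (π (a i) < π (a j) ↔ π (b i) < π (b j))

/-- `τ(n)`: the largest `k` such that every permutation of `[n]` has twins of length `k`. -/
noncomputable def permTau (n : ℕ) : ℕ :=
  sSup {k | ∀ π : Equiv.Perm (Fin n), PermTwins π k}

/-- An `r`-pattern, represented by its canonical representative: an ordered
`r`-matching of size `2` (on the vertex set `[2r]`). Every isomorphism class of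
ordered `r`-matchings of size `2` contains exactly one such representative. -/
def IsPattern (r : ℕ) (P : Finset (Finset ℕ)) : Prop := IsOrderedMatching r 2 P

/-- A `P`-clique: a matching all of whose pairs of (distinct) edges form the pattern `P`. -/
def IsPClique (P M : Finset (Finset ℕ)) : Prop :=
  ∀ e ∈ M, ∀ f ∈ M, e ≠ f → MatchIso {e, f} P

/-- `L(M)`: the size of the largest sub-matching of `M` that is a `P`-clique,
over all `r`-patterns `P`. -/
noncomputable def cliqueMax (r : ℕ) (M : Finset (Finset ℕ)) : ℕ :=
  sSup {k | ∃ P, IsPattern r P ∧ ∃ M' ⊆ M, IsPClique P M' ∧ M'.card = k}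

/-- `L_r(n)`: the minimum of `L(M)` over all ordered `r`-matchings of size `n`. -/
noncomputable def minClique (r n : ℕ) : ℕ :=
  sInf {l | ∃ M, IsOrderedMatching r n M ∧ cliqueMax r M = l}


/-!
A triple `(M, M₁, M₂)` is determined by the supports `S₁, S₂` of the twins, by `M₁` (a matching
on `S₁`) and by the rest `M \ (M₁ ∪ M₂)` (a matching on the complement of `S₁ ∪ S₂`): the twin
`M₂` is forced, being the image of `M₁` under the unique order-preserving bijection `S₁ → S₂`,
and conversely any such data assemble to a triple. So the count is the number of ordered pairs
of disjoint `rk`-sets times `α_k · α_{n-2k}`. The number `α_m` of perfect `r`-matchings of an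
`rm`-set is obtained by classifying them by the edge through a fixed vertex, which gives
`α_{m+1} = C(r(m+1) - 1, r - 1) · α_m`.
-/

open Finset
open scoped Nat

section Transport
variable {α : Type*} [LinearOrder α] {s t : Finset α}

theorem Finset.exists_bijOn_strictMonoOn (h : #s = #t) :
    ∃ f : α → α, Set.BijOn f s t ∧ StrictMonoOn f s := by
  let e : s ≃o t := (s.orderIsoOfFin h).symm.trans (t.orderIsoOfFin rfl)
  let f : α → α := fun x => if hx : x ∈ s then e ⟨x, hx⟩ else x
  have hf : ∀ x (hx : x ∈ s), f x = e ⟨x, hx⟩ := fun x hx => dif_pos hx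
  have hmono : StrictMonoOn f s := fun x hx y hy hxy => by
    rw [hf x hx, hf y hy]
    exact e.strictMono (Subtype.mk_lt_mk.2 hxy)
  refine ⟨f, ⟨fun x hx => ?_, hmono.injOn, fun y hy => ?_⟩, hmono⟩
  · rw [hf x hx]
    exact (e _).2
  · refine ⟨e.symm ⟨y, hy⟩, (e.symm _).2, ?_⟩
    rw [hf _ (e.symm _).2]
    simp

theorem Finset.eqOn_of_strictMonoOn_of_image_eq {β : Type*} [Preorder β] {f g : α → β}
    (hf : StrictMonoOn f s) (hg : StrictMonoOn g s) (h : f '' s = g '' s) : Set.EqOn f g s := by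
  have hfg := (StrictMono.range_inj (f := (s : Set α).domRestrict f)
    (g := (s : Set α).domRestrict g) (fun x y hxy => hf x.2 y.2 hxy)
    (fun x y hxy => hg x.2 y.2 hxy)).1 (by rwa [Set.range_domRestrict, Set.range_domRestrict])
  exact fun x hx => congrFun hfg ⟨x, hx⟩

end Transport

section Supports
variable {r : ℕ} {M N : Finset (Finset ℕ)}

theorem mem_mSupport {x : ℕ} : x ∈ mSupport M ↔ ∃ e ∈ M, x ∈ e := by
  simp [mSupport]

theorem subset_mSupport {e : Finset ℕ} (he : e ∈ M) : e ⊆ mSupport M :=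
  le_sup (f := id) he

theorem mSupport_singleton (e : Finset ℕ) : mSupport {e} = e := sup_singleton

theorem mSupport_union : mSupport (M ∪ N) = mSupport M ∪ mSupport N := sup_union

theorem mSupport_mono (h : M ⊆ N) : mSupport M ⊆ mSupport N := sup_mono h

theorem mSupport_image (f : ℕ → ℕ) :
    mSupport (M.image (·.image f)) = (mSupport M).image f := by
  ext x
  simp only [mem_mSupport, mem_image]
  grind

theorem IsMatching.mono (hN : IsMatching r N) (h : M ⊆ N) : IsMatching r M :=
  ⟨fun e he => hN.1 e (h he), fun e he f hf => hN.2 e (h he) f (h hf)⟩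

theorem IsMatching.card_mSupport (hM : IsMatching r M) : #(mSupport M) = r * #M := by
  rw [mSupport, sup_eq_biUnion, card_biUnion (t := id) fun e he f hf hne => hM.2 e he f hf hne]
  simp [sum_congr rfl hM.1, mul_comm]

theorem IsMatching.card_eq_of_card_mSupport {m : ℕ} (hr : 0 < r) (hM : IsMatching r M)
    (h : #(mSupport M) = r * m) : #M = m :=
  Nat.eq_of_mul_eq_mul_left hr (hM.card_mSupport ▸ h)

theorem IsMatching.union (hM : IsMatching r M) (hN : IsMatching r N)
    (h : Disjoint (mSupport M) (mSupport N)) : IsMatching r (M ∪ N) := by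
  refine ⟨fun e he => (mem_union.1 he).elim (hM.1 e) (hN.1 e), fun e he f hf hef => ?_⟩
  rcases mem_union.1 he with he | he <;> rcases mem_union.1 hf with hf | hf
  · exact hM.2 e he f hf hef
  · exact h.mono (subset_mSupport he) (subset_mSupport hf)
  · exact h.symm.mono (subset_mSupport he) (subset_mSupport hf)
  · exact hN.2 e he f hf hef

theorem IsMatching.mSupport_sdiff (hM : IsMatching r M) (h : N ⊆ M) :
    mSupport (M \ N) = mSupport M \ mSupport N := by
  ext x
  simp only [mem_sdiff, mem_mSupport]
  constructor
  · rintro ⟨e, ⟨heM, heN⟩, hxe⟩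
    refine ⟨⟨e, heM, hxe⟩, fun ⟨f, hfN, hxf⟩ => ?_⟩
    exact disjoint_left.1 (hM.2 e heM f (h hfN) (ne_of_mem_of_not_mem hfN heN).symm) hxe hxf
  · rintro ⟨⟨e, heM, hxe⟩, hx⟩
    exact ⟨e, ⟨heM, fun heN => hx ⟨e, heN, hxe⟩⟩, hxe⟩

theorem IsMatching.disjoint_of_disjoint_mSupport (hr : 0 < r) (hM : IsMatching r M)
    (h : Disjoint (mSupport M) (mSupport N)) : Disjoint M N := by
  refine disjoint_left.2 fun e heM heN => ?_
  obtain ⟨x, hx⟩ := card_pos.1 (hM.1 e heM ▸ hr)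
  exact disjoint_left.1 h (subset_mSupport heM hx) (subset_mSupport heN hx)

theorem IsMatching.image {f : ℕ → ℕ} (hM : IsMatching r M)
    (hf : Set.InjOn f (mSupport M)) : IsMatching r (M.image (·.image f)) := by
  refine ⟨fun e' he' => ?_, fun e' he' g' hg' hne => ?_⟩
  · obtain ⟨e, he, rfl⟩ := mem_image.1 he'
    exact (card_image_of_injOn (hf.mono (coe_subset.2 (subset_mSupport he)))).trans (hM.1 e he)
  · obtain ⟨e, he, rfl⟩ := mem_image.1 he'
    obtain ⟨g, hg, rfl⟩ := mem_image.1 hg'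
    have heg : e ≠ g := fun heg => hne (heg ▸ rfl)
    refine disjoint_left.2 fun y hye hyg => ?_
    obtain ⟨x, hx, rfl⟩ := mem_image.1 hye
    obtain ⟨x', hx', hxx'⟩ := mem_image.1 hyg
    cases hf (subset_mSupport hg hx') (subset_mSupport he hx) hxx'
    exact disjoint_left.1 (hM.2 e he g hg heg) hx hx'

end Supports

section Isomorphism
variable {r : ℕ} {M N N' : Finset (Finset ℕ)}

theorem MatchIso.eq_of_mSupport_eq (h : MatchIso M N) (h' : MatchIso M N')
    (hs : mSupport N = mSupport N') : N = N' := by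
  obtain ⟨f, hf, hfmono, rfl⟩ := h
  obtain ⟨g, hg, hgmono, rfl⟩ := h'
  have hfg : Set.EqOn f g (mSupport M) :=
    eqOn_of_strictMonoOn_of_image_eq (fun x hx y hy => hfmono x hx y hy)
      (fun x hx y hy => hgmono x hx y hy) (by rw [hf.image_eq, hg.image_eq, hs])
  exact image_congr fun e he => image_congr fun x hx => hfg (subset_mSupport he hx)

theorem IsMatching.exists_matchIso (hM : IsMatching r M) {t : Finset ℕ}
    (ht : #(mSupport M) = #t) : ∃ N, MatchIso M N ∧ IsMatching r N ∧ mSupport N = t := by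
  obtain ⟨f, hf, hfmono⟩ := exists_bijOn_strictMonoOn ht
  have hsupp : mSupport (M.image (·.image f)) = t := by
    rw [mSupport_image, ← coe_inj, coe_image, hf.image_eq]
  exact ⟨_, ⟨f, hsupp ▸ hf, fun x hx y hy => hfmono hx hy, rfl⟩, hM.image hf.injOn, hsupp⟩

end Isomorphism

section Counting
variable {r : ℕ} {S : Finset ℕ} {M : Finset (Finset ℕ)}

open Classical in
noncomputable def matchingsOn (r : ℕ) (S : Finset ℕ) : Finset (Finset (Finset ℕ)) :=
  {M ∈ S.powerset.powerset | IsMatching r M ∧ mSupport M = S}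

theorem mem_matchingsOn : M ∈ matchingsOn r S ↔ IsMatching r M ∧ mSupport M = S := by
  classical
  rw [matchingsOn, mem_filter, and_iff_right_iff_imp]
  rintro ⟨-, rfl⟩
  exact mem_powerset.2 fun e he => mem_powerset.2 (subset_mSupport he)

theorem matchingsOn_of_card_eq_zero (hr : 0 < r) (hS : #S = 0) : matchingsOn r S = {∅} := by
  refine eq_singleton_iff_unique_mem.2 ⟨mem_matchingsOn.2 ⟨?_, ?_⟩, fun M hM => ?_⟩
  · exact ⟨by simp, by simp⟩
  · simpa [mSupport, eq_comm] using hS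
  · obtain ⟨hmatch, rfl⟩ := mem_matchingsOn.1 hM
    exact card_eq_zero.1 (hmatch.card_eq_of_card_mSupport (m := 0) hr hS)

theorem insert_mem_matchingsOn {e : Finset ℕ} (he : e ⊆ S)
    (he_card : #e = r) (hM : M ∈ matchingsOn r (S \ e)) : insert e M ∈ matchingsOn r S := by
  obtain ⟨hM, hsupp⟩ := mem_matchingsOn.1 hM
  have he_match : IsMatching r {e} := ⟨by simpa using he_card, by simp⟩
  rw [insert_eq, mem_matchingsOn, mSupport_union, mSupport_singleton, hsupp,
    union_sdiff_of_subset he]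
  exact ⟨he_match.union hM (by rw [mSupport_singleton, hsupp]; exact disjoint_sdiff), rfl⟩

theorem erase_mem_matchingsOn {e : Finset ℕ} (hM : M ∈ matchingsOn r S) (he : e ∈ M) :
    M.erase e ∈ matchingsOn r (S \ e) := by
  obtain ⟨hmatch, rfl⟩ := mem_matchingsOn.1 hM
  rw [← sdiff_singleton_eq_erase, mem_matchingsOn,
    hmatch.mSupport_sdiff (singleton_subset_iff.2 he)]
  exact ⟨hmatch.mono sdiff_subset, by rw [mSupport_singleton]⟩

theorem matchingsOn_eq_biUnion {a : ℕ} (ha : a ∈ S) :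
    matchingsOn r S = {e ∈ S.powersetCard r | {a} ⊆ e}.biUnion
      fun e => (matchingsOn r (S \ e)).image (insert e) := by
  ext M
  simp only [mem_biUnion, mem_image, mem_filter, mem_powersetCard, singleton_subset_iff]
  constructor
  · intro hM
    obtain ⟨hmatch, hsupp⟩ := mem_matchingsOn.1 hM
    obtain ⟨e, heM, hae⟩ := mem_mSupport.1 (hsupp ▸ ha)
    exact ⟨e, ⟨⟨hsupp ▸ subset_mSupport heM, hmatch.1 e heM⟩, hae⟩, M.erase e,
      erase_mem_matchingsOn hM heM, insert_erase heM⟩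
  · rintro ⟨e, ⟨⟨heS, he_card⟩, -⟩, M', hM', rfl⟩
    exact insert_mem_matchingsOn heS he_card hM'

theorem card_matchingsOn_eq_sum {a : ℕ} (ha : a ∈ S) :
    #(matchingsOn r S) = ∑ e ∈ {e ∈ S.powersetCard r | {a} ⊆ e}, #(matchingsOn r (S \ e)) := by
  have hnot : ∀ e e', a ∈ e → a ∈ e' → ∀ M' ∈ matchingsOn r (S \ e'), e ∉ M' :=
    fun e e' hae hae' M' hM' heM' =>
      (mem_sdiff.1 ((mem_matchingsOn.1 hM').2 ▸ subset_mSupport heM' hae)).2 hae'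
  rw [matchingsOn_eq_biUnion ha, card_biUnion]
  · refine sum_congr rfl fun e he => card_image_of_injOn fun M₁ hM₁ M₂ hM₂ h => ?_
    have hae : a ∈ e := singleton_subset_iff.1 (mem_filter.1 he).2
    rw [← erase_insert (hnot e e hae hae M₁ hM₁), h, erase_insert (hnot e e hae hae M₂ hM₂)]
  · intro e he e' he' hne
    simp only [Function.onFun, disjoint_left, mem_image, not_exists, not_and]
    rintro _ ⟨M₁, -, rfl⟩ M₂ hM₂ h
    have heM₂ : e ∈ M₂ := (mem_insert.1 (h ▸ mem_insert_self e M₁)).resolve_left hne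
    exact hnot e e' (singleton_subset_iff.1 (mem_filter.1 he).2)
      (singleton_subset_iff.1 (mem_filter.1 he').2) M₂ hM₂ heM₂

theorem choose_pred_mul_factorial_mul_succ (hr : 0 < r) (m : ℕ) :
    (r * (m + 1) - 1).choose (r - 1) * ((r * m)! * (r ! * (m + 1))) = (r * (m + 1))! := by
  obtain ⟨s, rfl⟩ := Nat.exists_eq_add_of_le' hr
  have h := Nat.add_choose_mul_factorial_mul_factorial ((s + 1) * m) s
  rw [show (s + 1) * (m + 1) - 1 = (s + 1) * m + s by ring_nf; omega, Nat.add_sub_cancel,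
    show (s + 1) * (m + 1) = ((s + 1) * m + s) + 1 by ring, Nat.factorial_succ ((s + 1) * m + s),
    ← h, Nat.factorial_succ s]
  ring

theorem card_matchingsOn_mul (hr : 0 < r) (m : ℕ) (hS : #S = r * m) :
    #(matchingsOn r S) * (r ! ^ m * m !) = (r * m)! := by
  induction m generalizing S with
  | zero => simp [matchingsOn_of_card_eq_zero hr (by simpa using hS)]
  | succ m ih =>
    obtain ⟨a, ha⟩ := card_pos.1 (hS ▸ Nat.mul_pos hr m.succ_pos)
    have hterm : ∀ e ∈ {e ∈ S.powersetCard r | {a} ⊆ e},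
        #(matchingsOn r (S \ e)) * (r ! ^ (m + 1) * (m + 1)!) = (r * m)! * (r ! * (m + 1)) := by
      intro e he
      obtain ⟨⟨heS, he_card⟩, -⟩ := mem_filter.1 he |>.imp_left mem_powersetCard.1
      rw [← ih (by rw [card_sdiff_of_subset heS, hS, he_card]; ring_nf; omega),
        pow_succ, Nat.factorial_succ]
      ring
    rw [card_matchingsOn_eq_sum ha, sum_mul, sum_congr rfl hterm, sum_const, smul_eq_mul,
      card_filter_powersetCard_subset _ _ _ (singleton_subset_iff.2 ha)
        (by rw [card_singleton]; exact hr),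
      card_singleton, hS, choose_pred_mul_factorial_mul_succ hr]

theorem card_matchingsOn (hr : 0 < r) (m : ℕ) (hS : #S = r * m) :
    (#(matchingsOn r S) : ℝ) = (r * m)! / (r ! ^ m * m !) := by
  rw [eq_div_iff (by positivity)]
  exact_mod_cast card_matchingsOn_mul hr m hS

end Counting

section DisjointPairs
variable {α : Type*} [DecidableEq α]

def disjointPairs (U : Finset α) (c : ℕ) : Finset (Finset α × Finset α) :=
  {p ∈ U.powersetCard c ×ˢ U.powersetCard c | Disjoint p.1 p.2}

theorem mem_disjointPairs {U : Finset α} {c : ℕ} {p : Finset α × Finset α} :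
    p ∈ disjointPairs U c ↔
      (p.1 ⊆ U ∧ #p.1 = c) ∧ (p.2 ⊆ U ∧ #p.2 = c) ∧ Disjoint p.1 p.2 := by
  simp [disjointPairs, and_assoc]

theorem card_disjointPairs (U : Finset α) (c : ℕ) :
    #(disjointPairs U c) = (#U).choose c * (#U - c).choose c := by
  have hfiber : ∀ s ∈ U.powersetCard c,
      {t ∈ U.powersetCard c | Disjoint s t} = (U \ s).powersetCard c := fun s _ => by
    ext t
    simp [subset_sdiff, disjoint_comm, and_right_comm]
  calc #(disjointPairs U c)
      = ∑ s ∈ U.powersetCard c, #{t ∈ U.powersetCard c | Disjoint s t} := by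
        rw [disjointPairs, card_filter, sum_product]
        simp_rw [card_filter]
    _ = ∑ s ∈ U.powersetCard c, (#U - c).choose c := sum_congr rfl fun s hs => by
        obtain ⟨hsU, hs⟩ := mem_powersetCard.1 hs
        rw [hfiber s (mem_powersetCard.2 ⟨hsU, hs⟩), card_powersetCard,
          card_sdiff_of_subset hsU, hs]
    _ = (#U).choose c * (#U - c).choose c := by rw [sum_const, card_powersetCard, smul_eq_mul]

end DisjointPairs

section Twins
variable {r k : ℕ} {U : Finset ℕ} {T : Finset (Finset ℕ) × Finset (Finset ℕ) × Finset (Finset ℕ)}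

open Classical in
noncomputable def twinTriples (r k : ℕ) (U : Finset ℕ) :
    Finset (Finset (Finset ℕ) × Finset (Finset ℕ) × Finset (Finset ℕ)) :=
  {T ∈ U.powerset.powerset ×ˢ U.powerset.powerset ×ˢ U.powerset.powerset |
    T.1 ∈ matchingsOn r U ∧ T.2.1 ⊆ T.1 ∧ T.2.2 ⊆ T.1 ∧
      Disjoint (mSupport T.2.1) (mSupport T.2.2) ∧ MatchIso T.2.1 T.2.2 ∧
      #T.2.1 = k ∧ #T.2.2 = k}

theorem mem_twinTriples :
    T ∈ twinTriples r k U ↔ T.1 ∈ matchingsOn r U ∧ T.2.1 ⊆ T.1 ∧ T.2.2 ⊆ T.1 ∧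
      Disjoint (mSupport T.2.1) (mSupport T.2.2) ∧ MatchIso T.2.1 T.2.2 ∧
      #T.2.1 = k ∧ #T.2.2 = k := by
  classical
  rw [twinTriples, mem_filter, and_iff_right_iff_imp]
  rintro ⟨hM, h₁, h₂, -⟩
  have hT₁ : T.1 ∈ U.powerset.powerset := mem_powerset.2 fun e he =>
    mem_powerset.2 ((mem_matchingsOn.1 hM).2 ▸ subset_mSupport he)
  exact mem_product.2 ⟨hT₁, mem_product.2 ⟨mem_powerset.2 (h₁.trans (mem_powerset.1 hT₁)),
    mem_powerset.2 (h₂.trans (mem_powerset.1 hT₁))⟩⟩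

theorem mSupports_mem_disjointPairs (hT : T ∈ twinTriples r k U) :
    (mSupport T.2.1, mSupport T.2.2) ∈ disjointPairs U (r * k) := by
  obtain ⟨hM, h₁, h₂, hdisj, -, hk₁, hk₂⟩ := mem_twinTriples.1 hT
  obtain ⟨hmatch, hsupp⟩ := mem_matchingsOn.1 hM
  exact mem_disjointPairs.2 ⟨⟨hsupp ▸ mSupport_mono h₁, hk₁ ▸ (hmatch.mono h₁).card_mSupport⟩,
    ⟨hsupp ▸ mSupport_mono h₂, hk₂ ▸ (hmatch.mono h₂).card_mSupport⟩, hdisj⟩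

theorem card_twinTriples_fiber (hr : 0 < r) {p : Finset ℕ × Finset ℕ}
    (hp : p ∈ disjointPairs U (r * k)) :
    #{T ∈ twinTriples r k U | (mSupport T.2.1, mSupport T.2.2) = p} =
      #(matchingsOn r p.1) * #(matchingsOn r (U \ (p.1 ∪ p.2))) := by
  obtain ⟨⟨hp₁U, hp₁⟩, ⟨hp₂U, hp₂⟩, hp⟩ := mem_disjointPairs.1 hp
  rw [← card_product]
  refine card_nbij (fun T => (T.2.1, T.1 \ (T.2.1 ∪ T.2.2))) ?_ ?_ ?_
  · intro T hT
    obtain ⟨hT, hsupp⟩ := mem_filter.1 hT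
    obtain ⟨hM, h₁, h₂, -⟩ := mem_twinTriples.1 hT
    obtain ⟨hmatch, hMU⟩ := mem_matchingsOn.1 hM
    refine mem_product.2 ⟨mem_matchingsOn.2 ⟨hmatch.mono h₁, congrArg Prod.fst hsupp⟩,
      mem_matchingsOn.2 ⟨hmatch.mono sdiff_subset, ?_⟩⟩
    rw [hmatch.mSupport_sdiff (union_subset h₁ h₂), mSupport_union, hMU, ← hsupp]
  · intro T hT T' hT' h
    obtain ⟨hT, hsupp⟩ := mem_filter.1 (mem_coe.1 hT)
    obtain ⟨hT', hsupp'⟩ := mem_filter.1 (mem_coe.1 hT')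
    obtain ⟨-, h₁, h₂, -, hiso, -⟩ := mem_twinTriples.1 hT
    obtain ⟨-, h₁', h₂', -, hiso', -⟩ := mem_twinTriples.1 hT'
    obtain ⟨hA, hR⟩ := Prod.ext_iff.1 h
    simp only at hA hR
    have hB : T.2.2 = T'.2.2 := hiso.eq_of_mSupport_eq (hA ▸ hiso')
      ((congrArg Prod.snd hsupp).trans (congrArg Prod.snd hsupp').symm)
    refine Prod.ext ?_ (Prod.ext hA hB)
    rw [← sdiff_union_of_subset (union_subset h₁ h₂),
      ← sdiff_union_of_subset (union_subset h₁' h₂'), hR, hA, hB]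
  · rintro ⟨A, R⟩ hAR
    obtain ⟨hA, hR⟩ := mem_product.1 (mem_coe.1 hAR)
    obtain ⟨hAm, hAs⟩ := mem_matchingsOn.1 hA
    obtain ⟨hRm, hRs⟩ := mem_matchingsOn.1 hR
    obtain ⟨B, hiso, hBm, hBs⟩ := hAm.exists_matchIso (t := p.2) (by rw [hAs, hp₁, hp₂])
    have hAB : IsMatching r (A ∪ B) := hAm.union hBm (by rwa [hAs, hBs])
    have hABs : mSupport (A ∪ B) = p.1 ∪ p.2 := by rw [mSupport_union, hAs, hBs]
    have hABR : Disjoint (mSupport (A ∪ B)) (mSupport R) := by rw [hABs, hRs]; exact disjoint_sdiff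
    refine ⟨(A ∪ B ∪ R, A, B), mem_filter.2 ⟨mem_twinTriples.2 ⟨mem_matchingsOn.2
      ⟨hAB.union hRm hABR, ?_⟩, ?_, ?_, ?_, hiso, ?_, ?_⟩, ?_⟩, ?_⟩
    · rw [mSupport_union, hABs, hRs, union_sdiff_of_subset (union_subset hp₁U hp₂U)]
    · exact subset_union_left.trans subset_union_left
    · exact subset_union_right.trans subset_union_left
    · rwa [hAs, hBs]
    · exact hAm.card_eq_of_card_mSupport hr (hAs ▸ hp₁)
    · exact hBm.card_eq_of_card_mSupport hr (hBs ▸ hp₂)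
    · simp only [hAs, hBs]
    · simp only [union_sdiff_cancel_left (hAB.disjoint_of_disjoint_mSupport hr hABR)]

theorem card_twinTriples (hr : 0 < r) {m : ℕ} (hU : #U = r * (2 * k + m)) :
    (#(twinTriples r k U) : ℝ) = #(disjointPairs U (r * k)) *
      ((r * k)! / (r ! ^ k * k !)) * ((r * m)! / (r ! ^ m * m !)) := by
  have hfiber : ∀ p ∈ disjointPairs U (r * k),
      (#{T ∈ twinTriples r k U | (mSupport T.2.1, mSupport T.2.2) = p} : ℝ) =
        ((r * k)! / (r ! ^ k * k !)) * ((r * m)! / (r ! ^ m * m !)) := by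
    intro p hp
    obtain ⟨⟨hp₁U, hp₁⟩, ⟨hp₂U, hp₂⟩, hp⟩ := mem_disjointPairs.1 hp
    have hrest : #(U \ (p.1 ∪ p.2)) = r * m := by
      rw [card_sdiff_of_subset (union_subset hp₁U hp₂U), card_union_of_disjoint hp, hp₁, hp₂, hU,
        show r * (2 * k + m) = r * m + (r * k + r * k) by ring, Nat.add_sub_cancel]
    rw [card_twinTriples_fiber hr (mem_disjointPairs.2 ⟨⟨hp₁U, hp₁⟩, ⟨hp₂U, hp₂⟩, hp⟩),
      Nat.cast_mul, card_matchingsOn hr k hp₁, card_matchingsOn hr m hrest]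
  rw [card_eq_sum_card_fiberwise fun T hT => mSupports_mem_disjointPairs hT, Nat.cast_sum,
    sum_congr rfl hfiber, sum_const, nsmul_eq_mul, mul_assoc]

theorem isOrderedMatching_iff_mem_matchingsOn (hr : 0 < r) {n : ℕ} {M : Finset (Finset ℕ)} :
    IsOrderedMatching r n M ↔ M ∈ matchingsOn r (Icc 1 (r * n)) := by
  rw [mem_matchingsOn, IsOrderedMatching]
  refine ⟨fun ⟨hM, _, hs⟩ => ⟨hM, hs⟩, fun ⟨hM, hs⟩ => ⟨hM, ?_, hs⟩⟩
  exact hM.card_eq_of_card_mSupport hr (by rw [hs, Nat.card_Icc, Nat.add_sub_cancel])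

theorem setOf_twins_eq (hr : 0 < r) (n : ℕ) :
    {T : Finset (Finset ℕ) × Finset (Finset ℕ) × Finset (Finset ℕ) |
        IsOrderedMatching r n T.1 ∧ T.2.1 ⊆ T.1 ∧ T.2.2 ⊆ T.1 ∧
        Disjoint (mSupport T.2.1) (mSupport T.2.2) ∧ MatchIso T.2.1 T.2.2 ∧
        #T.2.1 = k ∧ #T.2.2 = k} = ↑(twinTriples r k (Icc 1 (r * n))) := by
  ext T
  rw [mem_coe, mem_twinTriples]
  exact and_congr_left' (isOrderedMatching_iff_mem_matchingsOn hr)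

theorem setOf_isOrderedMatching_eq (hr : 0 < r) (n : ℕ) :
    {M | IsOrderedMatching r n M} = ↑(matchingsOn r (Icc 1 (r * n))) :=
  Set.ext fun _ => isOrderedMatching_iff_mem_matchingsOn hr

end Twins

theorem expected_number_of_twins_general (r n k : ℕ) (hr : 2 ≤ r)
    (hk₂ : 2 * k ≤ n) :
    (Nat.card {T : Finset (Finset ℕ) × Finset (Finset ℕ) × Finset (Finset ℕ) |
        IsOrderedMatching r n T.1 ∧ T.2.1 ⊆ T.1 ∧ T.2.2 ⊆ T.1 ∧
        Disjoint (mSupport T.2.1) (mSupport T.2.2) ∧ MatchIso T.2.1 T.2.2 ∧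
        T.2.1.card = k ∧ T.2.2.card = k} : ℝ) =
      (Nat.factorial (r * n) : ℝ) /
          ((Nat.factorial (r * k) : ℝ) * (Nat.factorial (r * k) : ℝ) *
            (Nat.factorial (r * n - 2 * r * k) : ℝ)) *
        ((Nat.factorial (r * k) : ℝ) /
          ((Nat.factorial r : ℝ) ^ k * (Nat.factorial k : ℝ))) *
        ((Nat.factorial (r * (n - 2 * k)) : ℝ) /
          ((Nat.factorial r : ℝ) ^ (n - 2 * k) * (Nat.factorial (n - 2 * k) : ℝ))) ∧
    (Nat.card {T : Finset (Finset ℕ) × Finset (Finset ℕ) × Finset (Finset ℕ) |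
        IsOrderedMatching r n T.1 ∧ T.2.1 ⊆ T.1 ∧ T.2.2 ⊆ T.1 ∧
        Disjoint (mSupport T.2.1) (mSupport T.2.2) ∧ MatchIso T.2.1 T.2.2 ∧
        T.2.1.card = k ∧ T.2.2.card = k} : ℝ) /
      (Nat.card {M : Finset (Finset ℕ) | IsOrderedMatching r n M} : ℝ) =
      ((Nat.factorial n : ℝ) / (Nat.factorial (n - 2 * k) : ℝ)) *
        (1 / (Nat.factorial k : ℝ)) *
        ((Nat.factorial r : ℝ) ^ k / (Nat.factorial (r * k) : ℝ)) := by
  have hr₀ : 0 < r := by omega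
  obtain ⟨m, rfl⟩ := Nat.exists_eq_add_of_le hk₂
  have hN : r * k + (r * k + r * m) = r * (2 * k + m) := by ring
  have hU : #(Icc 1 (r * (2 * k + m))) = r * k + (r * k + r * m) := by
    rw [Nat.card_Icc, Nat.add_sub_cancel, hN]
  have hsub : r * (2 * k + m) - 2 * r * k = r * m := by
    rw [mul_add, ← mul_assoc, mul_comm r 2, Nat.add_sub_cancel_left]
  rw [setOf_twins_eq hr₀, setOf_isOrderedMatching_eq hr₀, Nat.card_coe_set_eq,
    Nat.card_coe_set_eq, Set.ncard_coe_finset, Set.ncard_coe_finset,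
    card_twinTriples hr₀ (m := m) (hU.trans hN), card_disjointPairs, hU,
    Nat.add_sub_cancel_left, Nat.cast_mul, Nat.cast_add_choose, Nat.cast_add_choose, hN,
    card_matchingsOn hr₀ _ (by rw [Nat.card_Icc, Nat.add_sub_cancel]), Nat.add_sub_cancel_left,
    hsub]
  constructor
  · field_simp
  · field_simp
    ring

/-- first-moment computation. For `r ≥ 2`, `n ≥ 1` and
`1 ≤ k ≤ n/2`, the number of pairs `(M, {M₁, M₂})` of an ordered `r`-matching of
size `n` with an unordered pair of vertex-disjoint isomorphic sub-matchings of
size `k` equals `(1/2)·(rn)!/((rk)!·(rk)!·(rn-2rk)!)·α_k·α_{n-2k}`, where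
`α_m = (rm)!/((r!)^m·m!)`. Equivalently, the expected number of twins of size
`k` in a uniformly random ordered `r`-matching of size `n` equals
`(1/2)·(n!/(n-2k)!)·(1/k!)·(r!)^k/(rk)!`. Below the count is over *ordered*
triples `(M, M₁, M₂)` (with `M₁ ≠ M₂`, as they are vertex-disjoint and
nonempty), which is exactly twice the number of pairs `(M, {M₁, M₂})`, so both
stated formulas appear with the factor `1/2` cancelled against the factor `2`. -/
theorem expected_number_of_twins (r n k : ℕ) (hr : 2 ≤ r) (hn : 1 ≤ n)
    (hk₁ : 1 ≤ k) (hk₂ : 2 * k ≤ n) :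
    (Nat.card {T : Finset (Finset ℕ) × Finset (Finset ℕ) × Finset (Finset ℕ) |
        IsOrderedMatching r n T.1 ∧ T.2.1 ⊆ T.1 ∧ T.2.2 ⊆ T.1 ∧
        Disjoint (mSupport T.2.1) (mSupport T.2.2) ∧ MatchIso T.2.1 T.2.2 ∧
        T.2.1.card = k ∧ T.2.2.card = k} : ℝ) =
      (Nat.factorial (r * n) : ℝ) /
          ((Nat.factorial (r * k) : ℝ) * (Nat.factorial (r * k) : ℝ) *
            (Nat.factorial (r * n - 2 * r * k) : ℝ)) *
        ((Nat.factorial (r * k) : ℝ) /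
          ((Nat.factorial r : ℝ) ^ k * (Nat.factorial k : ℝ))) *
        ((Nat.factorial (r * (n - 2 * k)) : ℝ) /
          ((Nat.factorial r : ℝ) ^ (n - 2 * k) * (Nat.factorial (n - 2 * k) : ℝ))) ∧
    (Nat.card {T : Finset (Finset ℕ) × Finset (Finset ℕ) × Finset (Finset ℕ) |
        IsOrderedMatching r n T.1 ∧ T.2.1 ⊆ T.1 ∧ T.2.2 ⊆ T.1 ∧
        Disjoint (mSupport T.2.1) (mSupport T.2.2) ∧ MatchIso T.2.1 T.2.2 ∧
        T.2.1.card = k ∧ T.2.2.card = k} : ℝ) /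
      (Nat.card {M : Finset (Finset ℕ) | IsOrderedMatching r n M} : ℝ) =
      ((Nat.factorial n : ℝ) / (Nat.factorial (n - 2 * k) : ℝ)) *
        (1 / (Nat.factorial k : ℝ)) *
        ((Nat.factorial r : ℝ) ^ k / (Nat.factorial (r * k) : ℝ)) :=
  expected_number_of_twins_general r n k hr hk₂
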